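/- arXiv:1802.08105 — 9 statements merged into one kernel-verified Lean document; each statement's English description precedes it below -/
import Mathlib

section
/- Let p and q be distinct odd primes, g a common primitive root of p and q, and f an integer with f ≡ g (mod p), f ≡ 1 (mod q). Set d = gcd(p-1,q-1) and e = lcm(p-1,q-1). Then every element of (Z/pqZ)* can be written as the class of g^u · f^v for some integers 0 ≤ u < e and 0 ≤ v < d. -/
lemma aux_gen (p : ℕ) (hp : p.Prime) (g : ℕ) (hgp : orderOf (g : ZMod p) = p - 1)
    {z : ZMod p} (hz : IsUnit z) : ∃ a : ℕ, a < p - 1 ∧ z = (g : ZMod p) ^ a := by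
  haveI : Fact p.Prime := ⟨hp⟩
  have hpos : 0 < p - 1 := Nat.sub_pos_of_lt hp.one_lt
  have hfin : IsOfFinOrder (g : ZMod p) := by
    rw [← orderOf_pos_iff, hgp]; exact hpos
  obtain ⟨G, hG⟩ := hfin.isUnit
  have hGo : orderOf G = p - 1 := by rw [← orderOf_units, hG, hgp]
  have htop : Subgroup.zpowers G = ⊤ := by
    rw [← Subgroup.card_eq_iff_eq_top, Nat.card_zpowers, hGo, Nat.card_eq_fintype_card,
      ZMod.card_units]
  have hy : hz.unit ∈ Submonoid.powers G := by
    rw [mem_powers_iff_mem_zpowers, htop]; trivial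
  obtain ⟨k, hk⟩ := hy
  refine ⟨k % (p - 1), Nat.mod_lt _ hpos, ?_⟩
  have h2 : G ^ (k % (p - 1)) = hz.unit := by rw [← hk, ← hGo, pow_mod_orderOf]
  have := congrArg Units.val h2
  rwa [Units.val_pow_eq_pow_val, hG, IsUnit.unit_spec, eq_comm] at this

lemma aux_pow (p : ℕ) (g : ℕ) (hgp : orderOf (g : ZMod p) = p - 1)
    {m m' : ℕ} (h : m ≡ m' [MOD p - 1]) : (g : ZMod p) ^ m = (g : ZMod p) ^ m' := by
  rw [← hgp] at h
  rw [← pow_mod_orderOf, h, pow_mod_orderOf]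

theorem stmt_3 (p q : ℕ) (hp : p.Prime) (hq : q.Prime)
    (hpodd : Odd p) (hqodd : Odd q) (hpq : p ≠ q)
    (g f : ℕ)
    (hgp : orderOf (g : ZMod p) = p - 1) (hgq : orderOf (g : ZMod q) = q - 1)
    (hfp : f ≡ g [MOD p]) (hfq : f ≡ 1 [MOD q])
    (d e : ℕ) (hd : d = Nat.gcd (p - 1) (q - 1)) (he : e = Nat.lcm (p - 1) (q - 1)) :
    ∀ x : (ZMod (p * q))ˣ, ∃ u v : ℕ, u < e ∧ v < d ∧
      (x : ZMod (p * q)) = (g : ZMod (p * q)) ^ u * (f : ZMod (p * q)) ^ v := by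
  intro x
  haveI : Fact p.Prime := ⟨hp⟩
  haveI : Fact q.Prime := ⟨hq⟩
  have hco : Nat.Coprime p q := (Nat.coprime_primes hp hq).mpr hpq
  have hp1 : 0 < p - 1 := Nat.sub_pos_of_lt hp.one_lt
  have hq1 : 0 < q - 1 := Nat.sub_pos_of_lt hq.one_lt
  have hd0 : 0 < d := by rw [hd]; exact Nat.gcd_pos_of_pos_left _ hp1
  have hdp : d ∣ p - 1 := hd ▸ Nat.gcd_dvd_left _ _
  haveI : NeZero (p * q) := ⟨Nat.mul_ne_zero hp.pos.ne' hq.pos.ne'⟩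
  set n : ℕ := (x : ZMod (p * q)).val with hn
  have hxn : ((n : ℕ) : ZMod (p * q)) = (x : ZMod (p * q)) := ZMod.natCast_rightInverse _
  have hdvd_p : p ∣ p * q := ⟨q, rfl⟩
  have hdvd_q : q ∣ p * q := ⟨p, mul_comm p q⟩
  have hup : IsUnit ((n : ZMod p)) := by
    have := (Units.isUnit x).map (ZMod.castHom hdvd_p (ZMod p))
    rwa [← hxn, map_natCast] at this
  have huq : IsUnit ((n : ZMod q)) := by
    have := (Units.isUnit x).map (ZMod.castHom hdvd_q (ZMod q))
    rwa [← hxn, map_natCast] at this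
  obtain ⟨a, ha, hau⟩ := aux_gen p hp g hgp hup
  obtain ⟨b, hb, hbu⟩ := aux_gen q hq g hgq huq
  -- choose v and c
  set v : ℕ := (a + b * (d - 1)) % d with hv
  have hvd : v < d := Nat.mod_lt _ hd0
  set c : ℕ := a + v * (p - 2) with hc
  -- c ≡ b mod d
  have hdz : (d : ℤ) ∣ (p : ℤ) - 1 := by
    have := Int.natCast_dvd_natCast.mpr hdp
    rwa [Nat.cast_sub hp.one_le] at this
  have hcb : c ≡ b [MOD Nat.gcd (p - 1) (q - 1)] := by
    rw [← hd, ← Int.natCast_modEq_iff]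
    have h1 : (v : ℤ) ≡ (a : ℤ) + (b : ℤ) * ((d : ℤ) - 1) [ZMOD (d : ℤ)] := by
      have h := Int.natCast_modEq_iff.mpr (Nat.mod_modEq (a + b * (d - 1)) d)
      rw [hv]
      push_cast [Nat.cast_sub hd0] at h ⊢
      exact h
    have hcz : (c : ℤ) = (a : ℤ) + (v : ℤ) * ((p : ℤ) - 2) := by
      rw [hc]; push_cast [Nat.cast_sub hp.two_le]; ring
    have hdd : (d : ℤ) ≡ 0 [ZMOD (d : ℤ)] := Int.modEq_zero_iff_dvd.mpr dvd_rfl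
    have hpp : (p : ℤ) - 2 ≡ -1 [ZMOD (d : ℤ)] := by
      rw [Int.modEq_iff_dvd]
      have : (-1 : ℤ) - ((p : ℤ) - 2) = -((p : ℤ) - 1) := by ring
      rw [this]; exact hdz.neg_right
    calc (c : ℤ) = (a : ℤ) + (v : ℤ) * ((p : ℤ) - 2) := hcz
      _ ≡ (a : ℤ) + ((a : ℤ) + (b : ℤ) * ((d : ℤ) - 1)) * ((p : ℤ) - 2) [ZMOD (d : ℤ)] :=
          (Int.ModEq.refl _).add (h1.mul (Int.ModEq.refl _))
      _ ≡ (a : ℤ) + ((a : ℤ) + (b : ℤ) * ((0 : ℤ) - 1)) * (-1) [ZMOD (d : ℤ)] :=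
          (Int.ModEq.refl _).add
            (((Int.ModEq.refl _).add ((Int.ModEq.refl _).mul (hdd.sub (Int.ModEq.refl 1)))).mul hpp)
      _ = (b : ℤ) := by ring
  set k := Nat.chineseRemainder' hcb with hkdef
  obtain ⟨hkp, hkq⟩ := k.2
  have hke : (k : ℕ) < Nat.lcm (p - 1) (q - 1) :=
    Nat.chineseRemainder'_lt_lcm hcb hp1.ne' hq1.ne'
  refine ⟨k, v, he ▸ hke, hvd, ?_⟩
  -- k + v ≡ a [MOD p - 1]
  have hcv : c + v = a + v * (p - 1) := by
    have h : p - 2 + 1 = p - 1 := by omega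
    calc c + v = a + v * (p - 2 + 1) := by rw [hc]; ring
      _ = a + v * (p - 1) := by rw [h]
  have hka : (k : ℕ) + v ≡ a [MOD p - 1] := by
    calc (k : ℕ) + v ≡ c + v [MOD p - 1] := hkp.add_right v
      _ = a + v * (p - 1) := hcv
      _ ≡ a [MOD p - 1] := Nat.add_mul_mod_self_right a v (p - 1)
  -- mod p congruence
  have hmodp : n ≡ g ^ (k : ℕ) * f ^ v [MOD p] := by
    have h1 : g ^ (k : ℕ) * f ^ v ≡ g ^ (k : ℕ) * g ^ v [MOD p] :=
      (Nat.ModEq.refl _).mul (hfp.pow v)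
    have h2 : (n : ZMod p) = ((g ^ ((k : ℕ) + v) : ℕ) : ZMod p) := by
      push_cast
      rw [hau]
      exact (aux_pow p g hgp hka).symm
    have h3 : n ≡ g ^ ((k : ℕ) + v) [MOD p] := (ZMod.natCast_eq_natCast_iff _ _ _).mp h2
    calc n ≡ g ^ ((k : ℕ) + v) [MOD p] := h3
      _ = g ^ (k : ℕ) * g ^ v := pow_add g _ v
      _ ≡ g ^ (k : ℕ) * f ^ v [MOD p] := h1.symm
  -- mod q congruence
  have hmodq : n ≡ g ^ (k : ℕ) * f ^ v [MOD q] := by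
    have h1 : g ^ (k : ℕ) * f ^ v ≡ g ^ (k : ℕ) * 1 ^ v [MOD q] :=
      (Nat.ModEq.refl _).mul (hfq.pow v)
    have h2 : (n : ZMod q) = ((g ^ (k : ℕ) : ℕ) : ZMod q) := by
      push_cast
      rw [hbu]
      exact (aux_pow q g hgq hkq).symm
    have h3 : n ≡ g ^ (k : ℕ) [MOD q] := (ZMod.natCast_eq_natCast_iff _ _ _).mp h2
    calc n ≡ g ^ (k : ℕ) [MOD q] := h3
      _ = g ^ (k : ℕ) * 1 ^ v := by rw [one_pow, mul_one]
      _ ≡ g ^ (k : ℕ) * f ^ v [MOD q] := h1.symm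
  have hmod : n ≡ g ^ (k : ℕ) * f ^ v [MOD p * q] :=
    (Nat.modEq_and_modEq_iff_modEq_mul hco).mp ⟨hmodp, hmodq⟩
  have : ((n : ℕ) : ZMod (p * q)) = ((g ^ (k : ℕ) * f ^ v : ℕ) : ZMod (p * q)) :=
    (ZMod.natCast_eq_natCast_iff _ _ _).mpr hmod
  rw [hxn] at this
  rw [this]
  push_cast
  ring
end

section
/- Let p be an odd prime, g a primitive root modulo p, d an even divisor of p-1. For integers i, j, define the cyclotomic number (i,j)_d as the number of pairs (u,v) with 0 ≤ u, v < (p-1)/d such that g^{i+du} + 1 ≡ g^{j+dv} (mod p). Then for any integer k, (d/2, k)_d = (d/2, k + d/2)_d. -/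
/-!
The cyclotomic number `(i, j)_d` counts the `x` in the class `C_i = g^i ⟨g^d⟩` with `x + 1 ∈ C_j`.
Since `d = 2 · (d/2)`, the class `C_{d/2}` is closed under inversion, and
`(x, y) ↦ (x⁻¹, y x⁻¹)` is an involution exchanging the solutions counted by `(d/2, k)_d` and by
`(d/2, k + d/2)_d`: indeed `x⁻¹ + 1 = (x + 1) x⁻¹` and `C_k C_{-d/2} = C_{k - d/2} = C_{k + d/2}`.
-/

open Finset

section GroupWithZero

variable {G₀ : Type*} [GroupWithZero G₀] {ζ : G₀} {d : ℕ}

def cyclotomicClass (ζ : G₀) (d : ℕ) (a : ℤ) : Set G₀ :=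
  Set.range fun m : ℤ => ζ ^ (a + d * m)

lemma ne_zero_of_mem_cyclotomicClass (hζ : ζ ≠ 0) {a : ℤ} {x : G₀}
    (hx : x ∈ cyclotomicClass ζ d a) : x ≠ 0 := by
  obtain ⟨m, rfl⟩ := hx
  exact zpow_ne_zero _ hζ

lemma inv_mem_cyclotomicClass {a : ℤ} {x : G₀} (hx : x ∈ cyclotomicClass ζ d a) :
    x⁻¹ ∈ cyclotomicClass ζ d (-a) := by
  obtain ⟨m, rfl⟩ := hx
  exact ⟨-m, by rw [← zpow_neg]; ring_nf⟩

lemma mul_mem_cyclotomicClass (hζ : ζ ≠ 0) {a b : ℤ} {x y : G₀}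
    (hx : x ∈ cyclotomicClass ζ d a) (hy : y ∈ cyclotomicClass ζ d b) :
    x * y ∈ cyclotomicClass ζ d (a + b) := by
  obtain ⟨m, rfl⟩ := hx
  obtain ⟨m', rfl⟩ := hy
  exact ⟨m + m', by rw [← zpow_add₀ hζ]; ring_nf⟩

lemma cyclotomicClass_add_mul (a t : ℤ) :
    cyclotomicClass ζ d (a + d * t) = cyclotomicClass ζ d a := by
  ext x
  simp only [cyclotomicClass, Set.mem_range]
  constructor
  · rintro ⟨m, rfl⟩
    exact ⟨t + m, by congr 1; ring⟩
  · rintro ⟨m, rfl⟩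
    exact ⟨m - t, by congr 1; ring⟩

lemma zpow_add_orderOf_mul (hζ : ζ ≠ 0) (z t : ℤ) : ζ ^ (z + orderOf ζ * t) = ζ ^ z := by
  rw [zpow_add₀ hζ, zpow_mul, zpow_natCast, pow_orderOf_eq_one, one_zpow, mul_one]

lemma cyclotomicClass_eq_image {n : ℕ} (hζ : orderOf ζ = d * n) (hζ0 : ζ ≠ 0) (hn : 0 < n)
    (a : ℤ) : cyclotomicClass ζ d a = (fun u : ℕ => ζ ^ (a + d * u)) '' Set.Iio n := by
  ext x
  constructor
  · rintro ⟨m, rfl⟩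
    have hr : 0 ≤ m % n := Int.emod_nonneg m (by omega)
    have hr' : m % n < n := Int.emod_lt_of_pos m (by omega)
    refine ⟨(m % n).toNat, by simp only [Set.mem_Iio]; omega, ?_⟩
    calc ζ ^ (a + d * ((m % n).toNat : ℤ))
        = ζ ^ (a + d * ((m % n).toNat : ℤ) + orderOf ζ * (m / n)) :=
          (zpow_add_orderOf_mul hζ0 _ _).symm
      _ = ζ ^ (a + d * m) := by
          rw [Int.toNat_of_nonneg hr, hζ]
          congr 1
          push_cast
          linear_combination (d : ℤ) * Int.emod_add_mul_ediv m n
  · rintro ⟨u, -, rfl⟩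
    exact ⟨u, rfl⟩

lemma injOn_zpow_add_mul {n : ℕ} (hζ : orderOf ζ = d * n) (hpos : 0 < orderOf ζ) (a : ℤ) :
    Set.InjOn (fun u : ℕ => ζ ^ (a + d * u)) (Set.Iio n) := by
  have hζ0 : ζ ≠ 0 := (orderOf_pos_iff.mp hpos).isUnit.ne_zero
  have hd : 0 < d := Nat.pos_of_mul_pos_right (hζ ▸ hpos)
  intro u hu v hv huv
  have hpow : ζ ^ (d * u) = ζ ^ (d * v) := by
    simp only [zpow_add₀ hζ0] at huv
    simpa only [← Nat.cast_mul, zpow_natCast] using mul_left_cancel₀ (zpow_ne_zero a hζ0) huv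
  have hlt : ∀ w ∈ Set.Iio n, d * w ∈ Set.Iio (orderOf ζ) := fun w hw => by
    rw [hζ]
    exact Nat.mul_lt_mul_of_pos_left hw hd
  exact Nat.eq_of_mul_eq_mul_left hd (pow_injOn_Iio_orderOf (hlt u hu) (hlt v hv) hpow)

end GroupWithZero

section DivisionRing

variable {K : Type*} [DivisionRing K] {ζ : K} {d : ℕ}

/-- Its cardinality is the cyclotomic number `(a, b)_d` when `ζ` is a primitive root. -/
def cyclotomicPairs (ζ : K) (d : ℕ) (a b : ℤ) : Set (K × K) :=
  {xy | xy.1 ∈ cyclotomicClass ζ d a ∧ xy.2 ∈ cyclotomicClass ζ d b ∧ xy.1 + 1 = xy.2}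

lemma cyclotomicPairs_add_mul (a b s t : ℤ) :
    cyclotomicPairs ζ d (a + d * s) (b + d * t) = cyclotomicPairs ζ d a b := by
  simp only [cyclotomicPairs, cyclotomicClass_add_mul]

theorem card_filter_eq_ncard_cyclotomicPairs [DecidableEq K] {n : ℕ} (hζ : orderOf ζ = d * n)
    (hpos : 0 < orderOf ζ) (a b : ℤ) :
    #((range n ×ˢ range n).filter
        fun uv : ℕ × ℕ => ζ ^ (a + d * uv.1) + 1 = ζ ^ (b + d * uv.2))
      = (cyclotomicPairs ζ d a b).ncard := by
  have hζ0 : ζ ≠ 0 := (orderOf_pos_iff.mp hpos).isUnit.ne_zero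
  have hn : 0 < n := Nat.pos_of_mul_pos_left (hζ ▸ hpos)
  rw [← Set.ncard_coe_finset]
  refine Set.BijOn.ncard_eq (f := Prod.map (fun u : ℕ => ζ ^ (a + d * u))
    (fun v : ℕ => ζ ^ (b + d * v))) ⟨?_, ?_, ?_⟩
  · rintro ⟨u, v⟩ huv
    exact ⟨⟨u, rfl⟩, ⟨v, rfl⟩, (Finset.mem_filter.mp huv).2⟩
  · refine ((injOn_zpow_add_mul hζ hpos a).prodMap (injOn_zpow_add_mul hζ hpos b)).mono ?_
    intro uv huv
    simpa using (Finset.mem_filter.mp huv).1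
  · rintro ⟨x, y⟩ ⟨hx, hy, hxy⟩
    rw [cyclotomicClass_eq_image hζ hζ0 hn] at hx hy
    obtain ⟨u, hu, rfl⟩ := hx
    obtain ⟨v, hv, rfl⟩ := hy
    exact ⟨(u, v), by simpa using ⟨⟨hu, hv⟩, hxy⟩, rfl⟩

theorem ncard_cyclotomicPairs_neg_sub (hζ : ζ ≠ 0) (a b : ℤ) :
    (cyclotomicPairs ζ d a b).ncard = (cyclotomicPairs ζ d (-a) (b - a)).ncard := by
  let σ : K × K → K × K := fun xy => (xy.1⁻¹, xy.2 * xy.1⁻¹)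
  have maps : ∀ a b, Set.MapsTo σ (cyclotomicPairs ζ d a b) (cyclotomicPairs ζ d (-a) (b - a)) := by
    rintro a b ⟨x, y⟩ ⟨hx, hy, hxy : x + 1 = y⟩
    subst hxy
    have hx0 := ne_zero_of_mem_cyclotomicClass hζ hx
    refine ⟨inv_mem_cyclotomicClass hx, ?_, ?_⟩
    · simpa only [sub_eq_add_neg] using mul_mem_cyclotomicClass hζ hy (inv_mem_cyclotomicClass hx)
    · simp only [σ, add_mul, mul_inv_cancel₀ hx0, one_mul, add_comm]
  have invOn : ∀ a b, Set.LeftInvOn σ σ (cyclotomicPairs ζ d a b) := by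
    rintro a b ⟨x, y⟩ ⟨hx, -, -⟩
    simp [σ, mul_assoc, inv_mul_cancel₀ (ne_zero_of_mem_cyclotomicClass hζ hx)]
  refine (Set.InvOn.bijOn ⟨invOn a b, invOn _ _⟩ (maps a b) ?_).ncard_eq
  simpa only [neg_neg, sub_neg_eq_add, sub_add_cancel] using maps (-a) (b - a)

theorem ncard_cyclotomicPairs_add_half (hζ : ζ ≠ 0) {h : ℕ} (hd : d = 2 * h) (k : ℤ) :
    (cyclotomicPairs ζ d h k).ncard = (cyclotomicPairs ζ d h (k + h)).ncard := by
  rw [ncard_cyclotomicPairs_neg_sub hζ, ← cyclotomicPairs_add_mul (h : ℤ) (k + h) (-1) (-1)]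
  congr 2 <;> (subst hd; push_cast; ring)

end DivisionRing

theorem stmt_5_general (p : ℕ) [Fact p.Prime]
    (g : ℕ) (hg : orderOf (g : ZMod p) = p - 1)
    (d : ℕ) (hd : d ∣ p - 1) (hdeven : Even d) (k : ℤ) :
    ((Finset.range ((p - 1) / d) ×ˢ Finset.range ((p - 1) / d)).filter
        (fun uv => (g : ZMod p) ^ (((d / 2 : ℕ) : ℤ) + d * uv.1) + 1
          = (g : ZMod p) ^ (k + d * uv.2))).card
    = ((Finset.range ((p - 1) / d) ×ˢ Finset.range ((p - 1) / d)).filter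
        (fun uv => (g : ZMod p) ^ (((d / 2 : ℕ) : ℤ) + d * uv.1) + 1
          = (g : ZMod p) ^ ((k + ((d / 2 : ℕ) : ℤ)) + d * uv.2))).card := by
  have hζ : orderOf (g : ZMod p) = d * ((p - 1) / d) := by rw [Nat.mul_div_cancel' hd, hg]
  have hpos : 0 < orderOf (g : ZMod p) := hg ▸ Nat.sub_pos_of_lt (Fact.out : p.Prime).one_lt
  rw [card_filter_eq_ncard_cyclotomicPairs hζ hpos, card_filter_eq_ncard_cyclotomicPairs hζ hpos]
  exact ncard_cyclotomicPairs_add_half (orderOf_pos_iff.mp hpos).isUnit.ne_zero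
    (Nat.two_mul_div_two_of_even hdeven).symm k

theorem stmt_5 (p : ℕ) [Fact p.Prime] (hpodd : Odd p)
    (g : ℕ) (hg : orderOf (g : ZMod p) = p - 1)
    (d : ℕ) (hd : d ∣ p - 1) (hdeven : Even d) (hd0 : 0 < d) (k : ℤ) :
    ((Finset.range ((p - 1) / d) ×ˢ Finset.range ((p - 1) / d)).filter
        (fun uv => (g : ZMod p) ^ (((d / 2 : ℕ) : ℤ) + d * uv.1) + 1
          = (g : ZMod p) ^ (k + d * uv.2))).card
    = ((Finset.range ((p - 1) / d) ×ˢ Finset.range ((p - 1) / d)).filter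
        (fun uv => (g : ZMod p) ^ (((d / 2 : ℕ) : ℤ) + d * uv.1) + 1
          = (g : ZMod p) ^ ((k + ((d / 2 : ℕ) : ℤ)) + d * uv.2))).card :=
  stmt_5_general p g hg d hd hdeven k
end

section
/- Let p be an odd prime, g a primitive root modulo p, and d an even divisor of p-1. Then the number of pairs (u,v) with 0 ≤ u, v < (p-1)/d and g^{du} + g^{d/2 + dv} ≡ 0 (mod p) equals (p-1)/d if (p-1)/d is odd, and 0 if (p-1)/d is even. -/
theorem stmt_6 (p : ℕ) (hp : p.Prime) (hpodd : Odd p)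
    (g : ℕ) (hg : orderOf (g : ZMod p) = p - 1)
    (d : ℕ) (hd : d ∣ p - 1) (hdeven : Even d) (hd0 : 0 < d) :
    ((Finset.range ((p - 1) / d) ×ˢ Finset.range ((p - 1) / d)).filter
        (fun uv => (g : ZMod p) ^ (d * uv.1) + (g : ZMod p) ^ (d / 2 + d * uv.2) = 0)).card
    = if Odd ((p - 1) / d) then (p - 1) / d else 0 := by
  haveI : Fact p.Prime := ⟨hp⟩
  obtain ⟨e, he⟩ := hdeven
  have hd2 : d = 2 * e := by omega
  have he0 : 0 < e := by omega
  set m := (p - 1) / d with hm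
  have hp3 : 3 ≤ p := by
    rcases hpodd with ⟨t, ht⟩
    have := hp.two_le; omega
  have hdm : d * m = p - 1 := Nat.mul_div_cancel' hd
  have hd2' : d / 2 = e := by omega
  have hm0 : 0 < m := by
    rcases Nat.eq_zero_or_pos m with h | h
    · rw [h, mul_zero] at hdm; omega
    · exact h
  have hg0 : (g : ZMod p) ≠ 0 := by
    intro h
    rw [h] at hg
    have h1 : (0 : ZMod p) ^ (p - 1) = 1 := hg ▸ pow_orderOf_eq_one (0 : ZMod p)
    rw [zero_pow (by omega)] at h1
    exact zero_ne_one h1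
  have hu : IsUnit (g : ZMod p) := isUnit_iff_ne_zero.mpr hg0
  have huord : orderOf hu.unit = p - 1 := by
    rw [← orderOf_units, hu.unit_spec, hg]
  have hpowiff : ∀ a b : ℕ, ((g : ZMod p) ^ a = (g : ZMod p) ^ b ↔ a ≡ b [MOD p - 1]) := by
    intro a b
    rw [← hu.unit_spec, ← Units.val_pow_eq_pow_val, ← Units.val_pow_eq_pow_val]
    rw [← huord, ← pow_eq_pow_iff_modEq]
    exact ⟨fun h => Units.ext h, fun h => congrArg _ h⟩
  have hme : 2 * (e * m) = p - 1 := by rw [← hdm, hd2]; ring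
  have hneg : (g : ZMod p) ^ (e * m) = -1 := by
    have hsq : (g : ZMod p) ^ (e * m) * (g : ZMod p) ^ (e * m) = 1 := by
      rw [← pow_add]
      have h2 : e * m + e * m = p - 1 := by rw [← hme]; ring
      rw [h2, ← hg, pow_orderOf_eq_one]
    rcases mul_self_eq_one_iff.mp hsq with h1 | h1
    · exfalso
      have hdvd := orderOf_dvd_of_pow_eq_one h1
      rw [hg] at hdvd
      have hpos : 0 < e * m := Nat.mul_pos he0 hm0
      have hlt : e * m < p - 1 := by
        rw [← hme, two_mul]; exact Nat.lt_add_of_pos_left hpos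
      exact absurd (Nat.le_of_dvd hpos hdvd) (not_le.mpr hlt)
    · exact h1
  have key : ∀ u v : ℕ, ((g : ZMod p) ^ (d * u) + (g : ZMod p) ^ (d / 2 + d * v) = 0
      ↔ 2 * u ≡ m + 1 + 2 * v [MOD 2 * m]) := by
    intro u v
    rw [hd2', add_eq_zero_iff_eq_neg, ← neg_one_mul, ← hneg, ← pow_add, hpowiff]
    have h1 : d * u = e * (2 * u) := by rw [hd2]; ring
    have h2 : e * m + (e + d * v) = e * (m + 1 + 2 * v) := by rw [hd2]; ring
    have h3 : p - 1 = e * (2 * m) := by rw [← hme]; ring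
    rw [h1, h2, h3, Nat.ModEq.mul_left_cancel_iff' he0.ne']
  by_cases hmodd : Odd m
  · rw [if_pos hmodd]
    obtain ⟨t, ht⟩ := hmodd
    have hcond : ∀ u v : ℕ, u < m →
        (2 * u ≡ m + 1 + 2 * v [MOD 2 * m] ↔ u = (v + (t + 1)) % m) := by
      intro u v hu
      have h1 : m + 1 + 2 * v = 2 * (v + (t + 1)) := by omega
      rw [h1, Nat.ModEq.mul_left_cancel_iff' two_ne_zero]
      unfold Nat.ModEq
      rw [Nat.mod_eq_of_lt hu]
    have hset : ((Finset.range m ×ˢ Finset.range m).filter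
        (fun uv => (g : ZMod p) ^ (d * uv.1) + (g : ZMod p) ^ (d / 2 + d * uv.2) = 0))
        = (Finset.range m).image (fun v => ((v + (t + 1)) % m, v)) := by
      ext ⟨u, v⟩
      simp only [Finset.mem_filter, Finset.mem_product, Finset.mem_range, Finset.mem_image]
      constructor
      · rintro ⟨⟨hultm, hvltm⟩, hcondh⟩
        refine ⟨v, hvltm, ?_⟩
        rw [← (hcond u v hultm).mp ((key u v).mp hcondh)]
      · rintro ⟨w, hw, hww⟩
        obtain ⟨h1, h2⟩ := Prod.mk.injEq _ _ _ _ ▸ hww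
        subst h2; subst h1
        refine ⟨⟨Nat.mod_lt _ hm0, hw⟩, ?_⟩
        exact (key _ _).mpr ((hcond _ _ (Nat.mod_lt _ hm0)).mpr rfl)
    rw [hset, Finset.card_image_of_injective _ (fun a b h => congrArg Prod.snd h),
      Finset.card_range]
  · rw [if_neg hmodd]
    rw [Finset.card_eq_zero, Finset.filter_eq_empty_iff]
    rintro ⟨u, v⟩ _
    intro hcondh
    have h2 := (key u v).mp hcondh
    have h3 : 2 * u ≡ m + 1 + 2 * v [MOD 2] := h2.of_mul_right m
    have h4 : (2 * u) % 2 = (m + 1 + 2 * v) % 2 := h3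
    obtain ⟨t, ht⟩ := Nat.not_odd_iff_even.mp hmodd
    omega
end

section
/- Let p be a prime with p ≡ 1 (mod 8), F a field of characteristic 2 containing a primitive p-th root of unity β, and g a primitive root modulo p. Define S_2(x) = ∑_{t=0}^{(p-1)/2 - 1} x^{g^{2t}}. Then S_2(β)² = S_2(β), i.e., S_2(β) ∈ {0,1}, and S_2(β) + S_2(β^g) = 1. -/
/-- The cyclotomic sum `S_d(x) = ∑_{t=0}^{(p-1)/d-1} x^{g^{dt}}`. -/
def cycSum (F : Type*) [Field F] (p g d : ℕ) (x : F) : F :=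
  ∑ t ∈ Finset.range ((p - 1) / d), x ^ (g ^ (d * t))

private lemma aux_sum_shift {M : Type*} [AddCancelCommMonoid M] (c : ℕ → M) (N : ℕ)
    (hc : ∀ t, c (t + N) = c t) (m : ℕ) :
    ∑ t ∈ Finset.range N, c (t + m) = ∑ t ∈ Finset.range N, c t := by
  induction m with
  | zero => simp
  | succ k ih =>
    rw [← ih]
    have h1 : ∑ t ∈ Finset.range (N + 1), c (t + k)
        = ∑ t ∈ Finset.range N, c (t + 1 + k) + c (0 + k) := Finset.sum_range_succ' _ _
    have h2 : ∑ t ∈ Finset.range (N + 1), c (t + k)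
        = ∑ t ∈ Finset.range N, c (t + k) + c (N + k) := Finset.sum_range_succ _ _
    have h3 : c (N + k) = c (0 + k) := by
      rw [zero_add, Nat.add_comm N k, hc]
    have h4 : ∑ t ∈ Finset.range N, c (t + (k + 1)) = ∑ t ∈ Finset.range N, c (t + 1 + k) := by
      apply Finset.sum_congr rfl; intro t _; ring_nf
    rw [h4]
    have := h1.symm.trans h2
    rw [h3] at this
    exact add_right_cancel this

private lemma aux_sum_range_two_mul {M : Type*} [AddCommMonoid M] (c : ℕ → M) (N : ℕ) :
    ∑ k ∈ Finset.range (2 * N), c k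
      = ∑ t ∈ Finset.range N, c (2 * t) + ∑ t ∈ Finset.range N, c (2 * t + 1) := by
  induction N with
  | zero => simp
  | succ n ih =>
    have h : 2 * (n + 1) = 2 * n + 1 + 1 := by ring
    rw [h, Finset.sum_range_succ, Finset.sum_range_succ, Finset.sum_range_succ (fun t => c (2*t)),
      Finset.sum_range_succ (fun t => c (2*t+1)), ih]
    abel

theorem stmt_8 (p : ℕ) (hp : p.Prime) (hp8 : p % 8 = 1)
    (F : Type*) [Field F] [CharP F 2] (β : F) (hβ : IsPrimitiveRoot β p)
    (g : ℕ) (hg : orderOf (g : ZMod p) = p - 1) :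
    (cycSum F p g 2 β) ^ 2 = cycSum F p g 2 β ∧
    (cycSum F p g 2 β = 0 ∨ cycSum F p g 2 β = 1) ∧
    cycSum F p g 2 β + cycSum F p g 2 (β ^ g) = 1 := by
  haveI : Fact p.Prime := ⟨hp⟩
  have hp1 : 1 < p := hp.one_lt
  have hp9 : 9 ≤ p := by omega
  set N : ℕ := (p - 1) / 2 with hN
  have h2N : 2 * N = p - 1 := by omega
  set gz : ZMod p := (g : ZMod p) with hgz
  -- gz is a unit
  have hgord : gz ^ (p - 1) = 1 := by rw [← hg]; exact pow_orderOf_eq_one gz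
  have hgu : IsUnit gz := IsUnit.of_pow_eq_one hgord (by omega)
  have hg0 : gz ≠ 0 := by
    intro h
    rw [h, zero_pow (by omega : p - 1 ≠ 0)] at hgord
    exact zero_ne_one hgord
  set u : (ZMod p)ˣ := hgu.unit with hu
  have huc : (u : ZMod p) = gz := hgu.unit_spec
  have huord : orderOf u = p - 1 := by
    rw [← hg, ← huc, orderOf_units]
  -- every nonzero element is a power of gz
  have hall : ∀ x : ZMod p, x ≠ 0 → ∃ j : ℕ, gz ^ j = x := by
    intro x hx
    have hxu : IsUnit x := isUnit_iff_ne_zero.mpr hx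
    have htop : Subgroup.zpowers u = ⊤ := by
      apply Subgroup.eq_top_of_card_eq
      rw [Nat.card_zpowers, huord, Nat.card_eq_fintype_card, ZMod.card_units_eq_totient,
        Nat.totient_prime hp]
    have hmem : hxu.unit ∈ Subgroup.zpowers u := htop ▸ Subgroup.mem_top _
    obtain ⟨j, hj⟩ := mem_powers_iff_mem_zpowers.mpr hmem
    exact ⟨j, by rw [← hxu.unit_spec, ← hj, ← huc]; push_cast; rfl⟩
  -- the function e
  set e : ZMod p → F := fun x => β ^ x.val with he_def
  have hβp : β ^ p = 1 := hβ.pow_eq_one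
  have he : ∀ n : ℕ, β ^ n = e ((n : ZMod p)) := by
    intro n
    show β ^ n = β ^ ((n : ZMod p)).val
    rw [ZMod.val_natCast]
    conv_lhs => rw [← Nat.div_add_mod n p]
    rw [pow_add, pow_mul, hβp, one_pow, one_mul]
  have he2 : ∀ x : ZMod p, e x ^ 2 = e (2 * x) := by
    intro x
    have : (e x) ^ 2 = β ^ (2 * x.val) := by rw [pow_mul, he_def]; ring
    rw [this, he (2 * x.val)]
    congr 1
    push_cast [ZMod.natCast_val, ZMod.cast_id]
    ring
  -- expression for cycSum
  have hS : cycSum F p g 2 β = ∑ t ∈ Finset.range N, e (gz ^ (2 * t)) := by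
    unfold cycSum
    apply Finset.sum_congr rfl
    intro t _
    rw [he (g ^ (2 * t))]
    congr 1
    push_cast
    rfl
  have hS' : cycSum F p g 2 (β ^ g) = ∑ t ∈ Finset.range N, e (gz ^ (2 * t + 1)) := by
    unfold cycSum
    apply Finset.sum_congr rfl
    intro t _
    rw [← pow_mul, ← pow_succ', he (g ^ (2 * t + 1))]
    congr 1
    push_cast
    rfl
  -- 2 is an even power of gz
  have hsq : IsSquare (2 : ZMod p) := by
    rw [ZMod.exists_sq_eq_two_iff (by omega : p ≠ 2)]
    exact Or.inl hp8
  obtain ⟨c, hc⟩ := hsq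
  have hc0 : c ≠ 0 := by
    intro h
    rw [h, mul_zero] at hc
    have : ((2 : ℕ) : ZMod p) = 0 := by push_cast; rw [hc]
    rw [ZMod.natCast_eq_zero_iff] at this
    exact absurd (Nat.le_of_dvd (by norm_num) this) (by omega)
  obtain ⟨m, hm⟩ := hall c hc0
  have hm2 : gz ^ (2 * m) = 2 := by
    rw [mul_comm 2 m, pow_mul, hm, sq, ← hc]
  -- periodicity
  have hper : ∀ t, e (gz ^ (2 * (t + N))) = e (gz ^ (2 * t)) := by
    intro t
    have : gz ^ (2 * (t + N)) = gz ^ (2 * t) := by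
      rw [Nat.mul_add, pow_add, h2N, hgord, mul_one]
    rw [this]
  -- Claim 1
  have claim1 : (cycSum F p g 2 β) ^ 2 = cycSum F p g 2 β := by
    rw [hS, CharTwo.sum_sq]
    have : ∀ t ∈ Finset.range N, e (gz ^ (2 * t)) ^ 2 = e (gz ^ (2 * (t + m))) := by
      intro t _
      rw [he2, ← hm2, ← pow_add]
      congr 2
      ring
    rw [Finset.sum_congr rfl this]
    exact aux_sum_shift (fun t => e (gz ^ (2 * t))) N hper m
  refine ⟨claim1, ?_, ?_⟩
  · -- Claim 2
    have h := claim1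
    have : cycSum F p g 2 β * (cycSum F p g 2 β - 1) = 0 := by
      rw [mul_sub, mul_one, ← sq, h, sub_self]
    rcases mul_eq_zero.mp this with h0 | h1
    · exact Or.inl h0
    · exact Or.inr (sub_eq_zero.mp h1)
  · -- Claim 3
    rw [hS, hS', ← aux_sum_range_two_mul (fun k => e (gz ^ k)) N, h2N]
    -- ∑_{k < p-1} e (gz^k) = 1
    have hinj : Set.InjOn (fun k => gz ^ k) (Finset.range (p - 1)) := by
      intro i hi j hj hij
      simp only [Finset.coe_range, Set.mem_Iio] at hi hj
      have : u ^ i = u ^ j := by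
        apply Units.ext
        push_cast [huc]
        exact hij
      exact pow_injOn_Iio_orderOf (by rwa [Set.mem_Iio, huord]) (by rwa [Set.mem_Iio, huord]) this
    have himg : (Finset.range (p - 1)).image (fun k => gz ^ k) = Finset.univ.erase 0 := by
      apply Finset.eq_of_subset_of_card_le
      · intro x hx
        simp only [Finset.mem_image] at hx
        obtain ⟨k, _, rfl⟩ := hx
        exact Finset.mem_erase.mpr ⟨pow_ne_zero _ hg0, Finset.mem_univ _⟩
      · rw [Finset.card_erase_of_mem (Finset.mem_univ _), Finset.card_univ, ZMod.card,
          Finset.card_image_of_injOn hinj, Finset.card_range]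
    have hsum : ∑ k ∈ Finset.range (p - 1), e (gz ^ k) = ∑ x ∈ Finset.univ.erase (0 : ZMod p), e x := by
      rw [← himg, Finset.sum_image (fun i hi j hj => hinj hi hj)]
    have htotal : ∑ x : ZMod p, e x = 0 := by
      rw [show (∑ x : ZMod p, e x) = ∑ a ∈ Finset.range p, β ^ a from ?_]
      · exact hβ.geom_sum_eq_zero hp1
      · refine Finset.sum_nbij' (fun x => x.val) (fun a => (a : ZMod p)) ?_ ?_ ?_ ?_ ?_
        · intro x _; exact Finset.mem_range.mpr (ZMod.val_lt x)
        · intro a _; exact Finset.mem_univ _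
        · intro x _; simp [ZMod.natCast_val, ZMod.cast_id]
        · intro a ha; exact ZMod.val_natCast_of_lt (Finset.mem_range.mp ha)
        · intro x _; rfl
    have he0 : e 0 = 1 := by
      show β ^ (0 : ZMod p).val = 1
      rw [ZMod.val_zero, pow_zero]
    have : ∑ x ∈ Finset.univ.erase (0 : ZMod p), e x + e 0 = 0 := by
      rw [Finset.sum_erase_add _ _ (Finset.mem_univ _)]
      exact htotal
    rw [hsum]
    rw [he0] at this
    have h11 : (1 : F) + 1 = 0 := by
      have h2 := CharP.cast_eq_zero F 2
      push_cast at h2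
      linear_combination h2
    linear_combination this - h11
end

section
/- Let p be a prime with p ≡ 1 (mod 8), written as p = a² + 2b² with integers a ≡ 1 (mod 4) and b. Then b is even, and if p ≡ 1 (mod 16) and a ≡ 1 (mod 8), then b ≡ 0 (mod 4); if p ≡ 1 (mod 16) and a ≡ 5 (mod 8), then b ≡ 2 (mod 4). -/
lemma key12 : ∀ A B : ZMod 16,
    ZMod.castHom (show (4:ℕ) ∣ 16 by norm_num) (ZMod 4) A = 1 →
    ZMod.castHom (show (8:ℕ) ∣ 16 by norm_num) (ZMod 8) (A ^ 2 + 2 * B ^ 2) = 1 →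
    (ZMod.castHom (show (2:ℕ) ∣ 16 by norm_num) (ZMod 2) B = 0 ∧
     (A ^ 2 + 2 * B ^ 2 = 1 →
        ZMod.castHom (show (8:ℕ) ∣ 16 by norm_num) (ZMod 8) A = 1 →
        ZMod.castHom (show (4:ℕ) ∣ 16 by norm_num) (ZMod 4) B = 0) ∧
     (A ^ 2 + 2 * B ^ 2 = 1 →
        ZMod.castHom (show (8:ℕ) ∣ 16 by norm_num) (ZMod 8) A = 5 →
        ZMod.castHom (show (4:ℕ) ∣ 16 by norm_num) (ZMod 4) B = 2)) := by decide

theorem stmt_12 (p : ℕ) (hp : p.Prime) (hp8 : p % 8 = 1)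
    (a b : ℤ) (hab : (p : ℤ) = a ^ 2 + 2 * b ^ 2) (ha : a ≡ 1 [ZMOD 4]) :
    Even b ∧
    (p % 16 = 1 → a ≡ 1 [ZMOD 8] → b ≡ 0 [ZMOD 4]) ∧
    (p % 16 = 1 → a ≡ 5 [ZMOD 8] → b ≡ 2 [ZMOD 4]) := by
  have h4 : ZMod.castHom (show (4:ℕ) ∣ 16 by norm_num) (ZMod 4) ((a:ℤ) : ZMod 16) = 1 := by
    rw [map_intCast]
    exact_mod_cast (ZMod.intCast_eq_intCast_iff a 1 4).mpr ha
  have h8 : ZMod.castHom (show (8:ℕ) ∣ 16 by norm_num) (ZMod 8)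
      (((a:ℤ) : ZMod 16) ^ 2 + 2 * ((b:ℤ) : ZMod 16) ^ 2) = 1 := by
    have hp8' : ((p : ℤ) : ZMod 8) = 1 := by
      push_cast
      rw [← ZMod.natCast_mod, hp8]; norm_num
    rw [hab] at hp8'
    rw [map_add, map_mul, map_pow, map_pow, map_intCast, map_intCast, map_ofNat]
    push_cast at hp8' ⊢
    exact hp8'
  obtain ⟨he, h1, h2⟩ := key12 ((a:ℤ) : ZMod 16) ((b:ℤ) : ZMod 16) h4 h8
  have h16 : ∀ _ : p % 16 = 1, ((a:ℤ) : ZMod 16) ^ 2 + 2 * ((b:ℤ) : ZMod 16) ^ 2 = 1 := by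
    intro hp16
    have : ((p : ℤ) : ZMod 16) = 1 := by
      push_cast
      rw [← ZMod.natCast_mod, hp16]; norm_num
    rw [hab] at this
    push_cast at this ⊢
    exact this
  rw [map_intCast] at he
  refine ⟨?_, ?_, ?_⟩
  · exact even_iff_two_dvd.mpr ((ZMod.intCast_zmod_eq_zero_iff_dvd b 2).mp he)
  · intro hp16 ha8
    have ha8' : ZMod.castHom (show (8:ℕ) ∣ 16 by norm_num) (ZMod 8) ((a:ℤ) : ZMod 16) = 1 := by
      rw [map_intCast]
      exact_mod_cast (ZMod.intCast_eq_intCast_iff a 1 8).mpr ha8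
    have := h1 (h16 hp16) ha8'
    rw [map_intCast] at this
    exact (ZMod.intCast_eq_intCast_iff b 0 4).mp (by exact_mod_cast this)
  · intro hp16 ha8
    have ha8' : ZMod.castHom (show (8:ℕ) ∣ 16 by norm_num) (ZMod 8) ((a:ℤ) : ZMod 16) = 5 := by
      rw [map_intCast]
      exact_mod_cast (ZMod.intCast_eq_intCast_iff a 5 8).mpr ha8
    have := h2 (h16 hp16) ha8'
    rw [map_intCast] at this
    exact (ZMod.intCast_eq_intCast_iff b 2 4).mp (by exact_mod_cast this)
end

section
/- Let p = (8x₁+1)² + 4(4y₁)² = (8a₁+1)² + 2(4b₁)² for integers x₁, y₁, a₁, b₁. Then x₁ ≡ a₁ (mod 2). -/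
theorem stmt_13 (p x₁ y₁ a₁ b₁ : ℤ)
    (h1 : p = (8 * x₁ + 1) ^ 2 + 4 * (4 * y₁) ^ 2)
    (h2 : p = (8 * a₁ + 1) ^ 2 + 2 * (4 * b₁) ^ 2) :
    x₁ ≡ a₁ [ZMOD 2] := by
  have e : 16*x₁ + 64*x₁^2 + 64*y₁^2 = 16*a₁ + 64*a₁^2 + 32*b₁^2 := by nlinarith [h1, h2]
  have hmod : x₁ ≡ a₁ [ZMOD (2:ℕ)] := by
    rw [Int.ModEq]
    generalize x₁^2 = X at e
    generalize y₁^2 = Y at e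
    generalize a₁^2 = A at e
    generalize b₁^2 = B at e
    omega
  exact hmod
end

section
/- Let p = (8x₁+5)² + 4(4y₁)² = (8a₁+1)² + 2(4b₁+2)² for integers x₁, y₁, a₁, b₁. Then a₁ ≡ x₁ + 1 (mod 4). -/
theorem stmt_14 (p x₁ y₁ a₁ b₁ : ℤ)
    (h1 : p = (8 * x₁ + 5) ^ 2 + 4 * (4 * y₁) ^ 2)
    (h2 : p = (8 * a₁ + 1) ^ 2 + 2 * (4 * b₁ + 2) ^ 2) :
    a₁ ≡ x₁ + 1 [ZMOD 4] := by
  obtain ⟨k, hk⟩ : Even (b₁ * (b₁ + 1)) := Int.even_mul_succ_self b₁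
  rw [Int.ModEq]
  have hd : (4 : ℤ) ∣ a₁ - (x₁ + 1) := by
    refine ⟨x₁ ^ 2 + y₁ ^ 2 - a₁ ^ 2 + x₁ - k, ?_⟩
    have h16 : 16 * (a₁ - (x₁ + 1)) =
        16 * (4 * (x₁ ^ 2 + y₁ ^ 2 - a₁ ^ 2 + x₁ - k)) := by
      linear_combination h1 - h2 - 32 * hk
    exact mul_left_cancel₀ (by norm_num) h16
  omega
end

section
/- Let p = (8x₁+1)² + 4(4y₁+2)² = (8a₁+5)² + 2(4b₁+2)² for integers x₁, y₁, a₁, b₁. Then x₁ - a₁ ≡ 1 (mod 4). -/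
theorem stmt_15 (p x₁ y₁ a₁ b₁ : ℤ)
    (h1 : p = (8 * x₁ + 1) ^ 2 + 4 * (4 * y₁ + 2) ^ 2)
    (h2 : p = (8 * a₁ + 5) ^ 2 + 2 * (4 * b₁ + 2) ^ 2) :
    x₁ - a₁ ≡ 1 [ZMOD 4] := by
  obtain ⟨k, hk⟩ := Int.even_mul_succ_self b₁
  have h16 : (16:ℤ) * (x₁ - a₁ - 1) = 64 * (a₁^2 - x₁^2 - y₁^2 - y₁ + k + a₁) := by
    linear_combination h2 - h1 + 32 * hk
  have key : x₁ - a₁ - 1 = 4 * (a₁^2 - x₁^2 - y₁^2 - y₁ + k + a₁) := by linarith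
  exact (Int.modEq_iff_dvd.mpr ⟨-(a₁^2 - x₁^2 - y₁^2 - y₁ + k + a₁), by linarith⟩)
end

section
/- Let p and q be distinct odd primes with d = gcd(p-1,q-1), and let g be a common primitive root of p and q, f ≡ g (mod p), f ≡ 1 (mod q). Define D_i = { g^{i+dt} f^v mod pq : 0 ≤ t < lcm(p-1,q-1)/d, 0 ≤ v < d } ⊆ (Z/pqZ)*. Then for integers i, j with i ≢ j (mod d), D_i and D_j are disjoint, and the union of D_0, D_1, ..., D_{d-1} equals (Z/pqZ)*. -/
theorem stmt_19 (p q : ℕ) (hp : p.Prime) (hq : q.Prime)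
    (hpodd : Odd p) (hqodd : Odd q) (hpq : p ≠ q)
    (g f : ℕ)
    (hgp : orderOf (g : ZMod p) = p - 1) (hgq : orderOf (g : ZMod q) = q - 1)
    (hfp : f ≡ g [MOD p]) (hfq : f ≡ 1 [MOD q])
    (d e : ℕ) (hd : d = Nat.gcd (p - 1) (q - 1)) (he : e = Nat.lcm (p - 1) (q - 1))
    (gu fu : (ZMod (p * q))ˣ)
    (hgu : (gu : ZMod (p * q)) = (g : ZMod (p * q)))
    (hfu : (fu : ZMod (p * q)) = (f : ZMod (p * q)))
    (D : ℤ → Set (ZMod (p * q))ˣ)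
    (hD : ∀ i : ℤ, D i = {z | ∃ t v : ℕ, t < e / d ∧ v < d ∧
      z = gu ^ (i + (d : ℤ) * t) * fu ^ (v : ℤ)}) :
    (∀ i j : ℤ, ¬ i ≡ j [ZMOD (d : ℤ)] → Disjoint (D i) (D j)) ∧
    (⋃ i ∈ Finset.range d, D (i : ℤ)) = Set.univ := by
  haveI hpf : Fact p.Prime := ⟨hp⟩
  haveI hqf : Fact q.Prime := ⟨hq⟩
  have hp1 : 1 < p := hp.one_lt
  have hq1 : 1 < q := hq.one_lt
  have hppos : 0 < p - 1 := by omega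
  have hqpos : 0 < q - 1 := by omega
  have hdpos : 0 < d := hd ▸ Nat.gcd_pos_of_pos_left _ hppos
  have hco : Nat.Coprime p q := (Nat.coprime_primes hp hq).mpr hpq
  haveI : NeZero (p * q) := ⟨by positivity⟩
  set πP : (ZMod (p * q))ˣ →* (ZMod p)ˣ :=
    Units.map (ZMod.castHom (dvd_mul_right p q) (ZMod p)).toMonoidHom with hπP
  set πQ : (ZMod (p * q))ˣ →* (ZMod q)ˣ :=
    Units.map (ZMod.castHom (dvd_mul_left q p) (ZMod q)).toMonoidHom with hπQ
  -- component values
  have hPg : ((πP gu : (ZMod p)ˣ) : ZMod p) = (g : ZMod p) := by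
    show (ZMod.castHom (dvd_mul_right p q) (ZMod p)) (gu : ZMod (p * q)) = _
    rw [hgu, map_natCast]
  have hQg : ((πQ gu : (ZMod q)ˣ) : ZMod q) = (g : ZMod q) := by
    show (ZMod.castHom (dvd_mul_left q p) (ZMod q)) (gu : ZMod (p * q)) = _
    rw [hgu, map_natCast]
  have hPf : ((πP fu : (ZMod p)ˣ) : ZMod p) = (g : ZMod p) := by
    show (ZMod.castHom (dvd_mul_right p q) (ZMod p)) (fu : ZMod (p * q)) = _
    rw [hfu, map_natCast, (ZMod.natCast_eq_natCast_iff _ _ _).mpr hfp]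
  have hQf : ((πQ fu : (ZMod q)ˣ) : ZMod q) = 1 := by
    show (ZMod.castHom (dvd_mul_left q p) (ZMod q)) (fu : ZMod (p * q)) = _
    rw [hfu, map_natCast, (ZMod.natCast_eq_natCast_iff _ _ _).mpr hfq, Nat.cast_one]
  have hPfu : πP fu = πP gu := Units.ext (by rw [hPf, hPg])
  have hQfu : πQ fu = 1 := Units.ext (by rw [hQf, Units.val_one])
  have hordP : orderOf (πP gu) = p - 1 := by rw [← orderOf_units, hPg, hgp]
  have hordQ : orderOf (πQ gu) = q - 1 := by rw [← orderOf_units, hQg, hgq]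
  -- injectivity via CRT
  have hinj : ∀ z w : (ZMod (p * q))ˣ, πP z = πP w → πQ z = πQ w → z = w := by
    intro z w h1 h2
    have e1 : (ZMod.castHom (dvd_mul_right p q) (ZMod p)) (z : ZMod (p * q)) =
        (ZMod.castHom (dvd_mul_right p q) (ZMod p)) (w : ZMod (p * q)) :=
      congrArg Units.val h1
    have e2 : (ZMod.castHom (dvd_mul_left q p) (ZMod q)) (z : ZMod (p * q)) =
        (ZMod.castHom (dvd_mul_left q p) (ZMod q)) (w : ZMod (p * q)) :=
      congrArg Units.val h2
    rw [ZMod.castHom_apply, ZMod.castHom_apply, ← ZMod.natCast_val, ← ZMod.natCast_val] at e1 e2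
    have m1 := (ZMod.natCast_eq_natCast_iff _ _ _).mp e1
    have m2 := (ZMod.natCast_eq_natCast_iff _ _ _).mp e2
    have m := (Nat.modEq_and_modEq_iff_modEq_mul hco).mp ⟨m1, m2⟩
    have h3 : (((z : ZMod (p * q)).val : ZMod (p * q))) = ((w : ZMod (p * q)).val : ZMod (p * q)) :=
      (ZMod.natCast_eq_natCast_iff _ _ _).mpr m
    exact Units.ext (by rwa [ZMod.natCast_zmod_val, ZMod.natCast_zmod_val] at h3)
  -- components of the standard elements
  have hcompP : ∀ m n : ℤ, πP (gu ^ m * fu ^ n) = (πP gu) ^ (m + n) := by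
    intro m n
    rw [map_mul, map_zpow, map_zpow, hPfu, ← zpow_add]
  have hcompQ : ∀ m n : ℤ, πQ (gu ^ m * fu ^ n) = (πQ gu) ^ m := by
    intro m n
    rw [map_mul, map_zpow, map_zpow, hQfu, one_zpow, mul_one]
  have hPiff : ∀ m n : ℤ, (πP gu) ^ m = (πP gu) ^ n ↔ m ≡ n [ZMOD ((p - 1 : ℕ) : ℤ)] := by
    intro m n; rw [zpow_eq_zpow_iff_modEq, hordP]
  have hQiff : ∀ m n : ℤ, (πQ gu) ^ m = (πQ gu) ^ n ↔ m ≡ n [ZMOD ((q - 1 : ℕ) : ℤ)] := by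
    intro m n; rw [zpow_eq_zpow_iff_modEq, hordQ]
  have hd_dvd_q : (d : ℤ) ∣ ((q - 1 : ℕ) : ℤ) :=
    Int.natCast_dvd_natCast.mpr (hd ▸ Nat.gcd_dvd_right _ _)
  constructor
  · -- disjointness
    intro i j hij
    rw [Set.disjoint_left]
    intro z hzi hzj
    rw [hD i] at hzi
    rw [hD j] at hzj
    obtain ⟨t, v, ht, hv, hz1⟩ := hzi
    obtain ⟨t', v', ht', hv', hz2⟩ := hzj
    apply hij
    have h1 : πQ z = (πQ gu) ^ (i + (d : ℤ) * t) := by rw [hz1]; exact hcompQ _ _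
    have h2 : πQ z = (πQ gu) ^ (j + (d : ℤ) * t') := by rw [hz2]; exact hcompQ _ _
    have h3 : (i + (d : ℤ) * t) ≡ (j + (d : ℤ) * t') [ZMOD ((q - 1 : ℕ) : ℤ)] :=
      (hQiff _ _).mp (h1.symm.trans h2)
    have h4 := h3.of_dvd hd_dvd_q
    have h5 : i ≡ i + (d : ℤ) * t [ZMOD (d : ℤ)] :=
      Int.modEq_iff_dvd.mpr ⟨t, by ring⟩
    have h6 : j + (d : ℤ) * t' ≡ j [ZMOD (d : ℤ)] :=
      Int.modEq_iff_dvd.mpr ⟨-t', by ring⟩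
    exact h5.trans (h4.trans h6)
  · -- union covers everything
    ext z
    simp only [Set.mem_iUnion, Finset.mem_range, Set.mem_univ, iff_true]
    -- discrete logarithms
    have hgen : ∀ (G : Type) [inst : Group G] [Fintype G] (u : G),
        orderOf u = Fintype.card G → ∀ x : G, ∃ k : ℤ, u ^ k = x := by
      intro G _ _ u hu x
      have htop : Subgroup.zpowers u = ⊤ := by
        apply Subgroup.eq_top_of_card_eq
        rw [Nat.card_zpowers, hu, Nat.card_eq_fintype_card]
      exact Subgroup.mem_zpowers_iff.mp (htop ▸ Subgroup.mem_top x)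
    obtain ⟨a, ha⟩ := hgen _ (πP gu) (by rw [hordP, ZMod.card_units]) (πP z)
    obtain ⟨b, hb⟩ := hgen _ (πQ gu) (by rw [hordQ, ZMod.card_units]) (πQ z)
    -- set up CRT data
    set p' : ℤ := (((p - 1) / d : ℕ) : ℤ) with hp'
    set q' : ℤ := (((q - 1) / d : ℕ) : ℤ) with hq'
    have hfactP : ((p - 1 : ℕ) : ℤ) = (d : ℤ) * p' := by
      rw [hp']
      rw [← Nat.cast_mul, Nat.cast_inj]
      exact (Nat.mul_div_cancel' (hd ▸ Nat.gcd_dvd_left (p - 1) (q - 1))).symm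
    have hfactQ : ((q - 1 : ℕ) : ℤ) = (d : ℤ) * q' := by
      rw [hq']
      rw [← Nat.cast_mul, Nat.cast_inj]
      exact (Nat.mul_div_cancel' (hd ▸ Nat.gcd_dvd_right (p - 1) (q - 1))).symm
    have hcop : IsCoprime p' q' := by
      rw [hp', hq']
      rw [Nat.isCoprime_iff_coprime]
      exact hd ▸ Nat.coprime_div_gcd_div_gcd (hd ▸ hdpos)
    obtain ⟨x, y, hxy⟩ := hcop
    set i : ℤ := b % (d : ℤ) with hi
    have hdne : (d : ℤ) ≠ 0 := by exact_mod_cast hdpos.ne'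
    have hdposZ : (0 : ℤ) < d := by exact_mod_cast hdpos
    have hi0 : 0 ≤ i := Int.emod_nonneg b hdne
    have hilt : i < d := Int.emod_lt_of_pos b hdposZ
    obtain ⟨B, hB⟩ : (d : ℤ) ∣ b - i := Int.dvd_self_sub_of_emod_eq rfl
    set v0 : ℤ := (a - i) % (d : ℤ) with hv0
    have hv00 : 0 ≤ v0 := Int.emod_nonneg _ hdne
    have hv0lt : v0 < d := Int.emod_lt_of_pos _ hdposZ
    obtain ⟨A, hA⟩ : (d : ℤ) ∣ (a - i) - v0 := Int.dvd_self_sub_of_emod_eq rfl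
    set t0 : ℤ := A * (y * q') + B * (x * p') with ht0
    have hP1 : (d : ℤ) * t0 ≡ a - i - v0 [ZMOD ((p - 1 : ℕ) : ℤ)] := by
      rw [Int.modEq_iff_dvd, hfactP]
      exact ⟨x * (A - B), by linear_combination hA - (d : ℤ) * A * hxy⟩
    have hQ1 : (d : ℤ) * t0 ≡ b - i [ZMOD ((q - 1 : ℕ) : ℤ)] := by
      rw [Int.modEq_iff_dvd, hfactQ]
      exact ⟨y * (B - A), by linear_combination hB - (d : ℤ) * B * hxy⟩
    -- reduce t0 modulo e / d
    have hde : d ∣ e := dvd_trans (hd ▸ Nat.gcd_dvd_left _ _) (he ▸ Nat.dvd_lcm_left _ _)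
    have hepos : 0 < e := by
      rw [he]
      exact Nat.pos_of_ne_zero (Nat.lcm_ne_zero hppos.ne' hqpos.ne')
    have hedpos : 0 < e / d := Nat.div_pos (Nat.le_of_dvd hepos hde) hdpos
    set ed : ℤ := ((e / d : ℕ) : ℤ) with hed
    have hedZ : (d : ℤ) * ed = (e : ℤ) := by
      rw [hed, ← Nat.cast_mul, Nat.cast_inj]
      exact Nat.mul_div_cancel' hde
    have hedne : ed ≠ 0 := by
      rw [hed]; exact_mod_cast hedpos.ne'
    have hedposZ : (0 : ℤ) < ed := by rw [hed]; exact_mod_cast hedpos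
    set t1 : ℤ := t0 % ed with ht1
    have ht10 : 0 ≤ t1 := Int.emod_nonneg _ hedne
    have ht1lt : t1 < ed := Int.emod_lt_of_pos _ hedposZ
    have hkey : ((e : ℕ) : ℤ) ∣ (d : ℤ) * t1 - (d : ℤ) * t0 := by
      refine ⟨-(t0 / ed), ?_⟩
      have hmd := Int.emod_def t0 ed
      linear_combination (d : ℤ) * hmd - (t0 / ed) * hedZ
    have hpe : ((p - 1 : ℕ) : ℤ) ∣ ((e : ℕ) : ℤ) :=
      Int.natCast_dvd_natCast.mpr (he ▸ Nat.dvd_lcm_left _ _)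
    have hqe : ((q - 1 : ℕ) : ℤ) ∣ ((e : ℕ) : ℤ) :=
      Int.natCast_dvd_natCast.mpr (he ▸ Nat.dvd_lcm_right _ _)
    have hP2 : (d : ℤ) * t1 ≡ (d : ℤ) * t0 [ZMOD ((p - 1 : ℕ) : ℤ)] :=
      Int.ModEq.symm (Int.modEq_iff_dvd.mpr (dvd_trans hpe hkey))
    have hQ2 : (d : ℤ) * t1 ≡ (d : ℤ) * t0 [ZMOD ((q - 1 : ℕ) : ℤ)] :=
      Int.ModEq.symm (Int.modEq_iff_dvd.mpr (dvd_trans hqe hkey))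
    -- assemble
    refine ⟨i.toNat, by omega, ?_⟩
    rw [hD]
    refine ⟨t1.toNat, v0.toNat, by omega, by omega, ?_⟩
    have hmi : ((i.toNat : ℕ) : ℤ) = i := Int.toNat_of_nonneg hi0
    have hmt : ((t1.toNat : ℕ) : ℤ) = t1 := Int.toNat_of_nonneg ht10
    have hmv : ((v0.toNat : ℕ) : ℤ) = v0 := Int.toNat_of_nonneg hv00
    rw [hmi, hmt, hmv]
    apply hinj
    · rw [hcompP, ← ha]
      rw [hPiff]
      have h7 : i + (d : ℤ) * t1 + v0 ≡ i + (a - i - v0) + v0 [ZMOD ((p - 1 : ℕ) : ℤ)] :=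
        ((hP2.trans hP1).add_left i).add_right v0
      have h8 : i + (a - i - v0) + v0 = a := by ring
      rw [h8] at h7
      exact h7.symm
    · rw [hcompQ, ← hb]
      rw [hQiff]
      have h7 : i + (d : ℤ) * t1 ≡ i + (b - i) [ZMOD ((q - 1 : ℕ) : ℤ)] :=
        (hQ2.trans hQ1).add_left i
      have h8 : i + (b - i) = b := by ring
      rw [h8] at h7
      exact h7.symm
end
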